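/- Let a = (a_1,...,a_n) with all a_i ≥ 1, and W_a the graph with vertices x_1,...,x_n and y_{i,ℓ} (1 ≤ ℓ ≤ a_i), edges {x_i,x_j} for i ≠ j and {x_i,y_{i,ℓ}}. Then I(W_a)^{(n)} : (x_1⋯x_n) = I(W_a) + (y_{1,1},...,y_{1,a_1})(y_{2,1},...,y_{2,a_2})⋯(y_{n,1},...,y_{n,a_n}). -/

import Mathlib

open MvPolynomial

/-- The depth of a module over `MvPolynomial V k` with respect to the maximal homogeneous
ideal `(X v : v ∈ V)`, defined as the least `i` with nonvanishing local cohomology. -/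
noncomputable def polyDepth (k V : Type) [Field k]
    (M : Type) [AddCommGroup M] [Module (MvPolynomial V k) M] : ℕ :=
  sInf {i : ℕ |
    Nontrivial ((localCohomology (Ideal.span (Set.range (X : V → MvPolynomial V k))) i).obj
      (ModuleCat.of (MvPolynomial V k) M))}

/-- depth of `S/I`. -/
noncomputable def depthQ (k V : Type) [Field k] (I : Ideal (MvPolynomial V k)) : ℕ :=
  polyDepth k V (MvPolynomial V k ⧸ I)

/-- The edge ideal of a simple graph `G`: generated by the `X i * X j` over edges `{i,j}`. -/
noncomputable def edgeIdeal (k : Type) [Field k] {V : Type} (G : SimpleGraph V) :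
    Ideal (MvPolynomial V k) :=
  Ideal.span {m | ∃ i j, G.Adj i j ∧ m = X i * X j}

/-- The `s`-th symbolic power of an ideal: the intersection of the `s`-th powers of its
minimal primes. -/
noncomputable def symbolicPower {R : Type} [CommRing R] (I : Ideal R) (s : ℕ) : Ideal R :=
  ⨅ p ∈ I.minimalPrimes, p ^ s

/-- The whisker graph `W_a`: the complete graph on `Fin n` together with `a i` leaves
`y_{i,1},…,y_{i,a i}` attached to each vertex `i`. -/
def whiskerGraph (n : ℕ) (a : Fin n → ℕ) :
    SimpleGraph (Fin n ⊕ Σ i : Fin n, Fin (a i)) :=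
  SimpleGraph.fromRel (fun u v =>
    (∃ i j : Fin n, i ≠ j ∧ u = Sum.inl i ∧ v = Sum.inl j) ∨
    (∃ (i : Fin n) (ℓ : Fin (a i)), u = Sum.inl i ∧ v = Sum.inr ⟨i, ℓ⟩))

/-!
The minimal primes of `I(W_a)` are the ideals of its minimal vertex covers: `P₀ = (x_1, …, x_n)`
and, for each `i`, `P_i = (x_j : j ≠ i) + (y_{i,1}, …, y_{i,a_i})` (every `x_i` has a leaf, so
these covers are pairwise incomparable). For an ideal `P` generated by variables, `f ∈ P ^ n` iff
every monomial of `f` has at least `n` factors among those variables, so the colon by a monomial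
of `P`-weight `w` lowers the exponent by `w`. The monomial `x_1 ⋯ x_n` has weight `n` for `P₀`
and `n - 1` for every `P_i`; hence the colon is `⋂ P_i`. A monomial lying in every `P_i` either
contains some `x_i` together with a neighbour of `x_i` (an edge of `W_a`), or contains no `x_i`
and hence a leaf `y_{i,ℓ}` of every `x_i`; so `⋂ P_i = I(W_a) + ∏ (y_{i,1}, …, y_{i,a_i})`.
-/

namespace Finsupp

variable {σ : Type*}

theorem monotone_weight (w : σ → ℕ) : Monotone (weight w : (σ →₀ ℕ) → ℕ) := by
  intro f g hfg
  obtain ⟨h, rfl⟩ := le_iff_exists_add.mp hfg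
  simp

theorem one_le_weight_indicator_iff {s : Set σ} {m : σ →₀ ℕ} :
    1 ≤ weight (s.indicator 1) m ↔ ∃ i ∈ s, m i ≠ 0 := by
  simp [Nat.one_le_iff_ne_zero, weight_apply, Finsupp.sum, Finset.sum_eq_zero_iff, and_comm,
    and_left_comm]

open Finset in
theorem weight_indicator_sum_single {ι : Type*} (s : Set σ) [DecidablePred (· ∈ s)]
    (t : Finset ι) (e : ι → σ) :
    weight (s.indicator 1) (∑ i ∈ t, single (e i) 1) = #{i ∈ t | e i ∈ s} := by
  simp [weight_single, Set.indicator_apply]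

end Finsupp

namespace MvPolynomial

open Finsupp

variable {σ R : Type*}

section CommSemiring

variable [CommSemiring R]

theorem pow_span_X_image_le (s : Set σ) (n : ℕ) :
    Ideal.span (X '' s : Set (MvPolynomial σ R)) ^ n ≤
      restrictSupportIdeal R {m | n ≤ weight (s.indicator 1) m}
        fun _ _ hle h => le_trans h (monotone_weight _ hle) := by
  classical
  induction n with
  | zero => intro p _ m _; exact Nat.zero_le _
  | succ n ih =>
    rw [pow_succ, Ideal.mul_le]
    intro p hp q hq m hm
    obtain ⟨m₁, hm₁, m₂, hm₂, rfl⟩ := Finset.mem_add.1 (support_mul p q hm)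
    have h₁ : n ≤ weight (s.indicator 1) m₁ := ih hp hm₁
    have h₂ : 1 ≤ weight (s.indicator 1) m₂ :=
      one_le_weight_indicator_iff.2 (mem_ideal_span_X_image.1 hq m₂ hm₂)
    show n + 1 ≤ weight _ (m₁ + m₂)
    rw [map_add]
    omega

theorem monomial_mem_pow_span_X_image {s : Set σ} {n : ℕ} {m : σ →₀ ℕ}
    (hm : n ≤ weight (s.indicator 1) m) (c : R) :
    monomial m c ∈ Ideal.span (X '' s : Set (MvPolynomial σ R)) ^ n := by
  induction n generalizing m with
  | zero => simp
  | succ n ih =>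
    obtain ⟨v, hv, hmv⟩ := one_le_weight_indicator_iff.1 (le_trans (by omega) hm)
    have hw := weight_sub_single_add (w := s.indicator (1 : σ → ℕ)) hmv
    rw [Set.indicator_of_mem hv, Pi.one_apply] at hw
    have hmul : monomial m c = X v * monomial (m - single v 1) c := by
      rw [X, monomial_mul, one_mul,
        add_tsub_cancel_of_le (single_le_iff.2 (Nat.one_le_iff_ne_zero.2 hmv))]
    rw [hmul, pow_succ']
    exact Ideal.mul_mem_mul (Ideal.subset_span ⟨v, hv, rfl⟩) (ih (by omega))

theorem mem_pow_span_X_image_iff {s : Set σ} {n : ℕ} {p : MvPolynomial σ R} :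
    p ∈ Ideal.span (X '' s) ^ n ↔ ∀ m ∈ p.support, n ≤ weight (s.indicator 1) m := by
  refine ⟨fun hp => pow_span_X_image_le s n hp, fun h => ?_⟩
  rw [p.as_sum]
  exact Ideal.sum_mem _ fun m hm => monomial_mem_pow_span_X_image (h m hm) _

/-- The truncated subtraction is intended: the colon is `⊤` once the weight of `d` reaches `n`. -/
theorem colon_monomial_pow_span_X_image (s : Set σ) (n : ℕ) (d : σ →₀ ℕ) :
    (Ideal.span (X '' s : Set (MvPolynomial σ R)) ^ n).colon {monomial d 1} =
      Ideal.span (X '' s) ^ (n - weight (s.indicator 1) d) := by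
  ext p
  have hsupp : (p * monomial d 1).support = p.support.map (addRightEmbedding d) :=
    AddMonoidAlgebra.support_coeff_mul_single p 1 (fun y => by rw [mul_one]) d
  simp only [Submodule.mem_colon_singleton, smul_eq_mul, mem_pow_span_X_image_iff, hsupp,
    Finset.forall_mem_map, addRightEmbedding_apply, map_add, Nat.sub_le_iff_le_add]

theorem X_mem_span_X_image_iff [Nontrivial R] {s : Set σ} {v : σ} :
    (X v : MvPolynomial σ R) ∈ Ideal.span (X '' s) ↔ v ∈ s := by
  classical
  simp [mem_ideal_span_X_image, support_X, Finsupp.single_apply]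

theorem span_X_image_le_span_X_image_iff [Nontrivial R] {s t : Set σ} :
    Ideal.span (X '' s : Set (MvPolynomial σ R)) ≤ Ideal.span (X '' t) ↔ s ⊆ t := by
  refine ⟨fun h v hv => X_mem_span_X_image_iff.1 (h (Ideal.subset_span ⟨v, hv, rfl⟩)),
    fun h => Ideal.span_mono (Set.image_mono h)⟩

theorem prod_X_dvd_monomial {T : Finset σ} {m : σ →₀ ℕ} (hm : ∀ v ∈ T, m v ≠ 0) (c : R) :
    ∏ v ∈ T, (X v : MvPolynomial σ R) ∣ monomial m c := by
  classical
  change ∏ v ∈ T, monomial (single v 1) (1 : R) ∣ _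
  rw [← monomial_sum_one, monomial_dvd_monomial]
  refine ⟨Or.inr fun u => ?_, one_dvd c⟩
  by_cases hu : u ∈ T
  · simpa [Finsupp.single_apply, hu, Nat.one_le_iff_ne_zero] using hm u hu
  · simp [Finsupp.single_apply, hu]

end CommSemiring

theorem isPrime_span_X_image [CommRing R] [IsDomain R] (s : Set σ) :
    (Ideal.span (X '' s : Set (MvPolynomial σ R))).IsPrime := by
  classical
  let φ : MvPolynomial σ R →ₐ[R] MvPolynomial σ R := aeval fun v => if v ∈ s then 0 else X v
  have hsub : ∀ p, p - φ p ∈ Ideal.span (X '' s) := by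
    intro p
    induction p using MvPolynomial.induction_on with
    | C c => simp [φ]
    | add p q hp hq => simpa [add_sub_add_comm] using Ideal.add_mem _ hp hq
    | mul_X p v hp =>
      by_cases hv : v ∈ s
      · simpa [φ, hv] using
          Ideal.mul_mem_left _ p (Ideal.subset_span (Set.mem_image_of_mem X hv))
      · simpa [φ, hv, sub_mul] using Ideal.mul_mem_right (X v) _ hp
  have hker : Ideal.span (X '' s) = RingHom.ker φ := by
    refine le_antisymm (Ideal.span_le.2 ?_) fun p hp => by
      simpa [show φ p = 0 from hp] using hsub p
    rintro _ ⟨v, hv, rfl⟩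
    simp [φ, hv]
  rw [hker]
  exact RingHom.ker_isPrime φ

end MvPolynomial

section EdgeIdeal

variable {k : Type} [Field k] {V : Type} {G : SimpleGraph V}

theorem X_mul_X_mem_edgeIdeal {u v : V} (h : G.Adj u v) :
    (X u * X v : MvPolynomial V k) ∈ edgeIdeal k G :=
  Ideal.subset_span ⟨u, v, h, rfl⟩

theorem monomial_mem_edgeIdeal {u v : V} (h : G.Adj u v) {m : V →₀ ℕ} (hu : m u ≠ 0)
    (hv : m v ≠ 0) (c : k) : monomial m c ∈ edgeIdeal k G := by
  classical
  refine Ideal.mem_of_dvd _ ?_ (X_mul_X_mem_edgeIdeal h)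
  rw [← Finset.prod_pair h.ne]
  exact prod_X_dvd_monomial (by simp [hu, hv]) c

theorem edgeIdeal_le_span_X_image_iff {C : Set V} :
    edgeIdeal k G ≤ Ideal.span (X '' C) ↔ G.IsVertexCover C := by
  refine ⟨fun h u v huv => ?_, fun hC => Ideal.span_le.2 ?_⟩
  · simpa only [X_mem_span_X_image_iff] using
      (isPrime_span_X_image C).mem_or_mem (h (X_mul_X_mem_edgeIdeal huv))
  · rintro _ ⟨u, v, huv, rfl⟩
    rcases hC huv with hu | hv
    · exact Ideal.mul_mem_right _ _ (Ideal.subset_span (Set.mem_image_of_mem X hu))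
    · exact Ideal.mul_mem_left _ _ (Ideal.subset_span (Set.mem_image_of_mem X hv))

theorem isVertexCover_setOf_X_mem {q : Ideal (MvPolynomial V k)} (hq : q.IsPrime)
    (hGq : edgeIdeal k G ≤ q) : G.IsVertexCover {v | X v ∈ q} :=
  fun _ _ huv => hq.mem_or_mem (hGq (X_mul_X_mem_edgeIdeal huv))

theorem span_X_image_setOf_X_mem_le (q : Ideal (MvPolynomial V k)) :
    Ideal.span (X '' {v | X v ∈ q}) ≤ q :=
  Ideal.span_le.2 fun _ ⟨_, hv, h⟩ => h ▸ hv

theorem minimalPrimes_edgeIdeal_eq_image {𝒞 : Set (Set V)}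
    (hcover : ∀ C ∈ 𝒞, G.IsVertexCover C) (hmin : ∀ D, G.IsVertexCover D → ∃ C ∈ 𝒞, C ⊆ D)
    (hanti : IsAntichain (· ⊆ ·) 𝒞) :
    (edgeIdeal k G).minimalPrimes = (fun C => Ideal.span (X '' C)) '' 𝒞 := by
  have hprime : ∀ C ∈ 𝒞, (Ideal.span (X '' C) : Ideal (MvPolynomial V k)).IsPrime ∧
      edgeIdeal k G ≤ Ideal.span (X '' C) :=
    fun C hC => ⟨isPrime_span_X_image C, edgeIdeal_le_span_X_image_iff.2 (hcover C hC)⟩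
  have hbelow : ∀ q : Ideal (MvPolynomial V k), q.IsPrime → edgeIdeal k G ≤ q →
      ∃ C ∈ 𝒞, Ideal.span (X '' C) ≤ q := fun q hq hGq => by
    obtain ⟨C, hC, hCq⟩ := hmin _ (isVertexCover_setOf_X_mem hq hGq)
    exact ⟨C, hC,
      (Ideal.span_mono (Set.image_mono hCq)).trans (span_X_image_setOf_X_mem_le q)⟩
  ext p
  constructor
  · rintro ⟨⟨hp, hGp⟩, hpmin⟩
    obtain ⟨C, hC, hCp⟩ := hbelow p hp hGp
    exact ⟨C, hC, le_antisymm hCp (hpmin (hprime C hC) hCp)⟩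
  · rintro ⟨C, hC, rfl⟩
    refine ⟨hprime C hC, fun q ⟨hq, hGq⟩ hqC => ?_⟩
    obtain ⟨D, hD, hDq⟩ := hbelow q hq hGq
    have hDC : D ⊆ C := span_X_image_le_span_X_image_iff.1 (hDq.trans hqC)
    rwa [hanti.eq hD hC hDC] at hDq

end EdgeIdeal

section WhiskerGraph

variable {n : ℕ} {a : Fin n → ℕ}

open Sum

def whiskerCliqueCover (n : ℕ) (a : Fin n → ℕ) : Set (Fin n ⊕ Σ i : Fin n, Fin (a i)) :=
  Set.range inl

/-- `{x_j | j ≠ i} ∪ {y_{i,ℓ} | ℓ}`. -/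
def whiskerLeafCover (n : ℕ) (a : Fin n → ℕ) (i : Fin n) :
    Set (Fin n ⊕ Σ i : Fin n, Fin (a i)) :=
  {v | Sum.elim (· ≠ i) (·.1 = i) v}

@[simp]
theorem whiskerGraph_adj_inl_inl {i j : Fin n} :
    (whiskerGraph n a).Adj (inl i) (inl j) ↔ i ≠ j := by
  simp [whiskerGraph, ne_comm]

@[simp]
theorem whiskerGraph_adj_inl_inr {i : Fin n} {p : Σ i : Fin n, Fin (a i)} :
    (whiskerGraph n a).Adj (inl i) (inr p) ↔ p.1 = i := by
  refine ⟨?_, fun h => ?_⟩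
  · rintro ⟨-, (⟨-, -, -, -, ⟨⟩⟩ | ⟨i', ℓ', ⟨⟩, ⟨⟩⟩) | (⟨-, -, -, ⟨⟩, -⟩ | ⟨-, -, ⟨⟩, -⟩)⟩
    rfl
  · obtain ⟨j, ℓ⟩ := p
    obtain rfl : j = i := h
    simp [whiskerGraph]

@[simp]
theorem whiskerGraph_adj_inr_inl {i : Fin n} {p : Σ i : Fin n, Fin (a i)} :
    (whiskerGraph n a).Adj (inr p) (inl i) ↔ p.1 = i := by
  rw [SimpleGraph.adj_comm, whiskerGraph_adj_inl_inr]

@[simp]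
theorem not_whiskerGraph_adj_inr_inr {p q : Σ i : Fin n, Fin (a i)} :
    ¬(whiskerGraph n a).Adj (inr p) (inr q) := by
  simp [whiskerGraph]

theorem whiskerGraph_adj_of_mem_whiskerLeafCover {i : Fin n}
    {v : Fin n ⊕ Σ i : Fin n, Fin (a i)} (hv : v ∈ whiskerLeafCover n a i) :
    (whiskerGraph n a).Adj (inl i) v := by
  rcases v with j | p
  · exact whiskerGraph_adj_inl_inl.2 (Ne.symm hv)
  · exact whiskerGraph_adj_inl_inr.2 hv

theorem isVertexCover_whiskerCliqueCover :
    (whiskerGraph n a).IsVertexCover (whiskerCliqueCover n a) := by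
  rintro (i | p) (j | q) h <;> simp_all [whiskerCliqueCover]

theorem isVertexCover_whiskerLeafCover (i : Fin n) :
    (whiskerGraph n a).IsVertexCover (whiskerLeafCover n a i) := by
  rintro (j | p) (j' | q) h <;> simp_all [whiskerLeafCover] <;> grind

theorem SimpleGraph.IsVertexCover.exists_whiskerCover_subset
    {D : Set (Fin n ⊕ Σ i : Fin n, Fin (a i))} (hD : (whiskerGraph n a).IsVertexCover D) :
    whiskerCliqueCover n a ⊆ D ∨ ∃ i, whiskerLeafCover n a i ⊆ D := by
  by_cases hx : ∀ i, inl i ∈ D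
  · exact Or.inl (Set.range_subset_iff.2 hx)
  · push Not at hx
    obtain ⟨i, hi⟩ := hx
    exact Or.inr ⟨i, fun v hv =>
      (hD (whiskerGraph_adj_of_mem_whiskerLeafCover hv)).resolve_left hi⟩

theorem isAntichain_whiskerCovers (ha : ∀ i, 1 ≤ a i) :
    IsAntichain (· ⊆ ·)
      (insert (whiskerCliqueCover n a) (Set.range (whiskerLeafCover n a))) := by
  have leaf_mem (i : Fin n) : inr ⟨i, ⟨0, ha i⟩⟩ ∈ whiskerLeafCover n a i := rfl
  refine IsAntichain.insert ?_ ?_ ?_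
  · rintro _ ⟨i, rfl⟩ _ ⟨j, rfl⟩ hne hsub
    exact hne (congrArg _ (hsub (leaf_mem i)))
  · rintro _ ⟨i, rfl⟩ - hsub
    obtain ⟨j, hj⟩ := hsub (leaf_mem i)
    exact inl_ne_inr hj
  · rintro _ ⟨i, rfl⟩ - hsub
    exact (hsub ⟨i, rfl⟩ : i ≠ i) rfl

theorem minimalPrimes_edgeIdeal_whiskerGraph (k : Type) [Field k] (ha : ∀ i, 1 ≤ a i) :
    (edgeIdeal k (whiskerGraph n a)).minimalPrimes = (fun C => Ideal.span (X '' C)) ''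
      insert (whiskerCliqueCover n a) (Set.range (whiskerLeafCover n a)) := by
  refine minimalPrimes_edgeIdeal_eq_image ?_ (fun D hD => ?_) (isAntichain_whiskerCovers ha)
  · rintro _ (rfl | ⟨i, rfl⟩)
    exacts [isVertexCover_whiskerCliqueCover, isVertexCover_whiskerLeafCover i]
  · rcases hD.exists_whiskerCover_subset with h | ⟨i, h⟩
    exacts [⟨_, Set.mem_insert _ _, h⟩, ⟨_, Set.mem_insert_of_mem _ ⟨i, rfl⟩, h⟩]

theorem iInf_span_X_whiskerLeafCover (k : Type) [Field k] :
    ⨅ i, Ideal.span (X '' whiskerLeafCover n a i) = edgeIdeal k (whiskerGraph n a) ⊔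
      ∏ i : Fin n, Ideal.span (Set.range fun ℓ : Fin (a i) =>
        (X (inr ⟨i, ℓ⟩) : MvPolynomial (Fin n ⊕ Σ i : Fin n, Fin (a i)) k)) := by
  refine le_antisymm (fun f hf => ?_) (sup_le ?_ ?_)
  · have hcov : ∀ m ∈ f.support, ∀ i, ∃ v ∈ whiskerLeafCover n a i, m v ≠ 0 := fun m hm i =>
      mem_ideal_span_X_image.1 (Ideal.mem_iInf.1 hf i) m hm
    rw [f.as_sum]
    refine Ideal.sum_mem _ fun m hm => ?_
    by_cases hx : ∃ i, m (inl i) ≠ 0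
    · obtain ⟨i, hi⟩ := hx
      obtain ⟨v, hv, hmv⟩ := hcov m hm i
      exact Ideal.mem_sup_left <|
        monomial_mem_edgeIdeal (whiskerGraph_adj_of_mem_whiskerLeafCover hv) hi hmv _
    · push Not at hx
      have hy : ∀ i, ∃ ℓ, m (inr ⟨i, ℓ⟩) ≠ 0 := fun i => by
        obtain ⟨j | ⟨j, ℓ⟩, hv, hmv⟩ := hcov m hm i
        · exact absurd (hx j) hmv
        · obtain rfl : j = i := hv
          exact ⟨ℓ, hmv⟩
      choose g hg using hy
      let e : Fin n ↪ Fin n ⊕ Σ i : Fin n, Fin (a i) :=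
        ⟨fun i => inr ⟨i, g i⟩, fun i j h => congrArg Sigma.fst (inr_injective h)⟩
      have hdvd : ∏ v ∈ Finset.univ.map e, X v ∣ monomial m (coeff m f) :=
        prod_X_dvd_monomial (fun v hv => by
          obtain ⟨i, -, rfl⟩ := Finset.mem_map.1 hv
          exact hg i) _
      refine Ideal.mem_sup_right (Ideal.mem_of_dvd _ hdvd ?_)
      rw [Finset.prod_map]
      exact Ideal.prod_mem_prod fun i _ => Ideal.subset_span ⟨g i, rfl⟩
  · exact le_iInf fun i => edgeIdeal_le_span_X_image_iff.2 (isVertexCover_whiskerLeafCover i)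
  · refine le_iInf fun i =>
      Ideal.prod_le_inf.trans ((Finset.inf_le (Finset.mem_univ i)).trans ?_)
    exact Ideal.span_le.2 fun _ ⟨ℓ, h⟩ => Ideal.subset_span ⟨inr ⟨i, ℓ⟩, rfl, h⟩

end WhiskerGraph

section Colon

variable {k : Type} [Field k] {n : ℕ} {a : Fin n → ℕ}

theorem colon_pow_span_X_whiskerCliqueCover :
    (Ideal.span (X '' whiskerCliqueCover n a) ^ n).colon
      {(monomial (∑ j, Finsupp.single (Sum.inl j) 1) 1 :
        MvPolynomial (Fin n ⊕ Σ i : Fin n, Fin (a i)) k)} = ⊤ := by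
  classical
  rw [colon_monomial_pow_span_X_image, Finsupp.weight_indicator_sum_single]
  simp [whiskerCliqueCover]

theorem colon_pow_span_X_whiskerLeafCover (i : Fin n) :
    (Ideal.span (X '' whiskerLeafCover n a i) ^ n).colon
      {(monomial (∑ j, Finsupp.single (Sum.inl j) 1) 1 :
        MvPolynomial (Fin n ⊕ Σ i : Fin n, Fin (a i)) k)} =
      Ideal.span (X '' whiskerLeafCover n a i) := by
  classical
  rw [colon_monomial_pow_span_X_image, Finsupp.weight_indicator_sum_single]
  convert pow_one (Ideal.span (X '' whiskerLeafCover n a i) :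
    Ideal (MvPolynomial (Fin n ⊕ Σ i : Fin n, Fin (a i)) k)) using 2
  have hcard :
      (Finset.univ.filter fun j => Sum.inl j ∈ whiskerLeafCover n a i).card = n - 1 := by
    have hfilter : (Finset.univ.filter fun j => Sum.inl j ∈ whiskerLeafCover n a i) =
        Finset.univ.erase i := by
      ext j
      rw [Finset.mem_filter]
      simp [whiskerLeafCover]
    rw [hfilter, Finset.card_erase_of_mem (Finset.mem_univ i), Finset.card_fin]
  have := i.pos
  omega

end Colon

/-- For the whisker graph `W_a` with all `a i ≥ 1`,
`I(W_a)^{(n)} : (x_1⋯x_n) = I(W_a) + (y_{1,1},…,y_{1,a_1})⋯(y_{n,1},…,y_{n,a_n})`. -/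
theorem stmt13 (k : Type) [Field k] (n : ℕ) (a : Fin n → ℕ) (ha : ∀ i, 1 ≤ a i) :
    (symbolicPower (edgeIdeal k (whiskerGraph n a)) n).colon
        (Ideal.span {∏ i : Fin n,
          (X (Sum.inl i) : MvPolynomial (Fin n ⊕ Σ i : Fin n, Fin (a i)) k)}) =
      edgeIdeal k (whiskerGraph n a) ⊔
        ∏ i : Fin n, Ideal.span (Set.range fun ℓ : Fin (a i) =>
          (X (Sum.inr ⟨i, ℓ⟩) : MvPolynomial (Fin n ⊕ Σ i : Fin n, Fin (a i)) k)) := by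
  have hprod : ∏ i : Fin n, (X (Sum.inl i) : MvPolynomial (Fin n ⊕ Σ i : Fin n, Fin (a i)) k) =
      monomial (∑ j, Finsupp.single (Sum.inl j) 1) 1 :=
    (monomial_sum_one _ _).symm
  rw [symbolicPower, minimalPrimes_edgeIdeal_whiskerGraph k ha, iInf_image, iInf_insert,
    iInf_range, Ideal.colon_span, hprod, Submodule.inf_colon, Submodule.iInf_colon,
    colon_pow_span_X_whiskerCliqueCover, top_inf_eq]
  simp only [colon_pow_span_X_whiskerLeafCover]
  exact iInf_span_X_whiskerLeafCover k
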